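/- arXiv:1512.07411 — 3 statements merged into one kernel-verified Lean document; each statement's English description precedes it below -/
import Mathlib

section
/- A priori bounds from energy conservation: under the stated assumptions on κ, ρ, f and the classical solution y, for every t > 0 one has ∫_{ℝⁿ} κ(x) (∂ₜ y(x,t))² dx ≤ ∫_{ℝⁿ} ρ(x)⁻¹ |∇f(x)|² dx and ∫_{ℝⁿ} ρ(x)⁻¹ |∇ₓ y(x,t)|² dx ≤ ∫_{ℝⁿ} ρ(x)⁻¹ |∇f(x)|² dx. -/
open MeasureTheory Real Filter

/-- Divergence of a vector field on `EuclideanSpace ℝ (Fin n)`. -/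
noncomputable def ediv {n : ℕ} (v : EuclideanSpace ℝ (Fin n) → EuclideanSpace ℝ (Fin n))
    (x : EuclideanSpace ℝ (Fin n)) : ℝ :=
  ∑ i, fderiv ℝ v x (EuclideanSpace.single i (1 : ℝ)) i

open Set Function Topology InnerProductSpace

/-!
The energy `∫ κ (∂ₜy)² + ρ⁻¹ ‖∇ₓy‖²` is conserved. Since `y(·, t)` stays in a fixed compact set on
bounded time intervals, it may be differentiated under the integral sign; by the symmetry
`∂ₜ∇ₓy = ∇ₓ∂ₜy` of second derivatives and the wave equation, the time derivative of the energy
density is the divergence of the compactly supported field `2 ∂ₜy ρ⁻¹ ∇ₓy`, whose integral vanishes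
by integration by parts. At `t = 0` the energy is `∫ ρ⁻¹ ‖∇f‖²` because `∂ₜy(·, 0) = 0`, and both
terms of the energy are nonnegative.
-/

theorem integral_fderiv_apply_eq_zero {E F : Type*} [NormedAddCommGroup E] [NormedSpace ℝ E]
    [FiniteDimensional ℝ E] [MeasurableSpace E] [BorelSpace E] {μ : Measure E} [μ.IsAddHaarMeasure]
    [NormedAddCommGroup F] [NormedSpace ℝ F] {g : E → F} (hg : ContDiff ℝ 1 g)
    (hcs : HasCompactSupport g) (w : E) :
    ∫ x, fderiv ℝ g x w ∂μ = 0 := by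
  have hg' : Continuous fun x => fderiv ℝ g x w :=
    (hg.continuous_fderiv one_ne_zero).clm_apply continuous_const
  -- integrate by parts against the constant function `1`
  have := integral_bilinear_fderiv_right_eq_neg_left_of_integrable (μ := μ) (v := w)
    (f := fun _ : E => (1 : ℝ)) (B := ContinuousLinearMap.lsmul ℝ ℝ)
    (by simp) (by simpa using hg'.integrable_of_hasCompactSupport (hcs.fderiv_apply ℝ w))
    (by simpa using hg.continuous.integrable_of_hasCompactSupport hcs)
    (fun _ _ => differentiableAt_const _) (fun x _ => hg.differentiable one_ne_zero x)
  simpa using this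

theorem integral_ediv_eq_zero {n : ℕ} {v : EuclideanSpace ℝ (Fin n) → EuclideanSpace ℝ (Fin n)}
    (hv : ContDiff ℝ 1 v) (hcs : HasCompactSupport v) : ∫ x, ediv v x = 0 := by
  have hint (w) : Integrable fun x => fderiv ℝ v x w :=
    ((hv.continuous_fderiv one_ne_zero).clm_apply continuous_const).integrable_of_hasCompactSupport
      (hcs.fderiv_apply ℝ w)
  let proj (i : Fin n) : EuclideanSpace ℝ (Fin n) →L[ℝ] ℝ := EuclideanSpace.proj i
  refine (integral_finsetSum _ fun i _ => (proj i).integrable_comp (hint _)).trans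
    (Finset.sum_eq_zero fun i _ => ?_)
  exact ((proj i).integral_comp_comm (hint _)).trans
    (by rw [integral_fderiv_apply_eq_zero hv hcs, map_zero])

theorem ediv_smul {n : ℕ} {φ : EuclideanSpace ℝ (Fin n) → ℝ}
    {v : EuclideanSpace ℝ (Fin n) → EuclideanSpace ℝ (Fin n)} {x : EuclideanSpace ℝ (Fin n)}
    (hφ : DifferentiableAt ℝ φ x) (hv : DifferentiableAt ℝ v x) :
    ediv (fun z => φ z • v z) x = fderiv ℝ φ x (v x) + φ x * ediv v x := by
  have hexpand : fderiv ℝ φ x (v x) = ∑ i, fderiv ℝ φ x (EuclideanSpace.single i 1) * v x i := by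
    conv_lhs => rw [← (EuclideanSpace.basisFun (Fin n) ℝ).sum_repr (v x)]
    simp [mul_comm]
  simp only [ediv, fderiv_fun_smul hφ hv, add_apply, smul_apply,
    ContinuousLinearMap.smulRight_apply, PiLp.add_apply, PiLp.smul_apply, smul_eq_mul,
    Finset.sum_add_distrib, ← Finset.mul_sum, hexpand]
  ring

section TimeDerivative

variable {E F : Type*} [NormedAddCommGroup E] [NormedSpace ℝ E] [NormedAddCommGroup F]
  [NormedSpace ℝ F]

noncomputable def timeDeriv (Y : E × ℝ → F) (p : E × ℝ) : F := fderiv ℝ Y p (0, 1)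

theorem hasDerivAt_timeSlice {Y : E × ℝ → F} {x : E} {t : ℝ}
    (hY : DifferentiableAt ℝ Y (x, t)) :
    HasDerivAt (fun s => Y (x, s)) (timeDeriv Y (x, t)) t :=
  hY.hasFDerivAt.comp_hasDerivAt t ((hasDerivAt_const t x).prodMk (hasDerivAt_id t))

theorem fderiv_timeDeriv {Y : E × ℝ → F} {p : E × ℝ} (hY : DifferentiableAt ℝ (fderiv ℝ Y) p)
    (v : E × ℝ) : fderiv ℝ (timeDeriv Y) p v = fderiv ℝ (fderiv ℝ Y) p v (0, 1) := by
  rw [show timeDeriv Y = fun q => fderiv ℝ Y q (0, 1) from rfl,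
    fderiv_clm_apply hY (differentiableAt_const _)]
  simp

theorem contDiff_timeDeriv {Y : E × ℝ → F} {m n : WithTop ℕ∞} (hY : ContDiff ℝ m Y)
    (hnm : n + 1 ≤ m) : ContDiff ℝ n (timeDeriv Y) :=
  (hY.fderiv_right hnm).clm_apply contDiff_const

theorem timeDeriv_eq_zero_of_eqOn_Icc {Y : E × ℝ → F} {x : E} {a b t : ℝ}
    (hY : DifferentiableAt ℝ Y (x, t)) (hab : a < b) (ht : t ∈ Icc a b)
    (h : ∀ s ∈ Icc a b, Y (x, s) = 0) : timeDeriv Y (x, t) = 0 :=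
  (uniqueDiffOn_Icc hab t ht).eq_deriv _ (hasDerivAt_timeSlice hY).hasDerivWithinAt
    ((hasDerivWithinAt_const t _ 0).congr h (h t ht))

end TimeDerivative

section SpaceGradient

variable {E : Type*} [NormedAddCommGroup E] [InnerProductSpace ℝ E] [CompleteSpace E]

noncomputable def spaceGradientCLM : ((E × ℝ) →L[ℝ] ℝ) →L[ℝ] E :=
  (toDual ℝ E).symm.toLinearIsometry.toContinuousLinearMap ∘L
    (ContinuousLinearMap.compL ℝ E (E × ℝ) ℝ).flip (ContinuousLinearMap.inl ℝ E ℝ)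

/-- `∇ₓY(x, t)`, obtained from `fderiv ℝ Y` by a continuous linear map, so that it inherits the
joint regularity of `Y` in `(x, t)`. -/
noncomputable def spaceGradient (Y : E × ℝ → ℝ) (p : E × ℝ) : E :=
  spaceGradientCLM (fderiv ℝ Y p)

theorem contDiff_spaceGradient {Y : E × ℝ → ℝ} {m n : WithTop ℕ∞} (hY : ContDiff ℝ m Y)
    (hnm : n + 1 ≤ m) : ContDiff ℝ n (spaceGradient Y) :=
  by exact spaceGradientCLM.contDiff.comp (hY.fderiv_right hnm)

theorem gradient_spaceSlice {Y : E × ℝ → ℝ} {x : E} {t : ℝ}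
    (hY : DifferentiableAt ℝ Y (x, t)) :
    gradient (fun w => Y (w, t)) x = spaceGradient Y (x, t) := by
  have h : HasFDerivAt (fun w => Y (w, t)) ((fderiv ℝ Y (x, t)).comp (.inl ℝ E ℝ)) x :=
    hY.hasFDerivAt.comp x (hasFDerivAt_prodMk_left x t)
  rw [gradient, h.fderiv]
  rfl

theorem fderiv_spaceSlice_apply {Y : E × ℝ → ℝ} {x : E} {t : ℝ}
    (hY : DifferentiableAt ℝ Y (x, t)) (w : E) :
    fderiv ℝ (fun z => Y (z, t)) x w = ⟪spaceGradient Y (x, t), w⟫_ℝ := by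
  rw [← gradient_spaceSlice hY, gradient, toDual_symm_apply]

theorem spaceGradient_eq_zero_of_notMem {Y : E × ℝ → ℝ} {C : Set E} {x : E} {t : ℝ}
    (hY : DifferentiableAt ℝ Y (x, t)) (hC : IsClosed C) (hx : x ∉ C)
    (h : ∀ w ∉ C, Y (w, t) = 0) : spaceGradient Y (x, t) = 0 := by
  have hloc : (fun w => Y (w, t)) =ᶠ[𝓝 x] fun _ => 0 :=
    Filter.eventually_of_mem (hC.isOpen_compl.mem_nhds hx) h
  rw [← gradient_spaceSlice hY, hloc.gradient_eq, gradient_fun_const]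

theorem hasDerivAt_spaceGradient_timeSlice {Y : E × ℝ → ℝ} (hY : ContDiff ℝ 2 Y) (x : E) (t : ℝ) :
    HasDerivAt (fun s => spaceGradient Y (x, s)) (spaceGradient (timeDeriv Y) (x, t)) t := by
  have hDY : Differentiable ℝ (fderiv ℝ Y) :=
    (hY.fderiv_right (m := 1) le_rfl).differentiable one_ne_zero
  refine (spaceGradientCLM.hasFDerivAt.comp_hasDerivAt t
    (hasDerivAt_timeSlice (Y := fderiv ℝ Y) (hDY (x, t)))).congr_deriv
    (congrArg spaceGradientCLM (ContinuousLinearMap.ext fun v => ?_))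
  rw [fderiv_timeDeriv (hDY _)]
  exact (hY.contDiffAt.isSymmSndFDerivAt (by simp)) _ _

end SpaceGradient

section ParametricIntegral

variable {X : Type*} [TopologicalSpace X] [T2Space X] [MeasurableSpace X] [OpensMeasurableSpace X]
  {μ : Measure X} [IsLocallyFiniteMeasure μ] {F F' : ℝ → X → ℝ} {K : Set X}

theorem hasDerivAt_setIntegral_of_continuous (hF : Continuous (uncurry F))
    (hF' : Continuous (uncurry F')) (hderiv : ∀ t x, HasDerivAt (F · x) (F' t x) t)
    (hK : IsCompact K) (t₀ : ℝ) :
    HasDerivAt (fun t => ∫ x in K, F t x ∂μ) (∫ x in K, F' t₀ x ∂μ) t₀ := by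
  obtain ⟨M, hM⟩ :=
    ((isCompact_Icc (a := t₀ - 1) (b := t₀ + 1)).prod hK).exists_bound_of_continuousOn
      hF'.continuousOn
  refine (hasDerivAt_integral_of_dominated_loc_of_deriv_le (bound := fun _ => M)
    (Icc_mem_nhds (sub_one_lt t₀) (lt_add_one t₀))
    (.of_forall fun t => (hF.comp (Continuous.prodMk_right t)).aestronglyMeasurable)
    ((hF.comp (Continuous.prodMk_right t₀)).continuousOn.integrableOn_compact hK)
    (hF'.comp (Continuous.prodMk_right t₀)).aestronglyMeasurable
    ((ae_restrict_iff' hK.measurableSet).2 (.of_forall fun x hx t ht => hM (t, x) ⟨ht, hx⟩))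
    (integrableOn_const hK.measure_lt_top.ne) (.of_forall fun x t _ => hderiv t x)).2

theorem integral_eq_of_integral_deriv_eq_zero (hF : Continuous (uncurry F))
    (hF' : Continuous (uncurry F')) (hderiv : ∀ t x, HasDerivAt (F · x) (F' t x) t)
    (hK : IsCompact K) {a b : ℝ} (hab : a ≤ b) (hvanish : ∀ t ∈ Icc a b, ∀ x ∉ K, F t x = 0)
    (hzero : ∀ t ∈ Ioo a b, ∫ x, F' t x ∂μ = 0) :
    ∫ x, F b x ∂μ = ∫ x, F a x ∂μ := by
  have hrestrict (t) (ht : t ∈ Icc a b) : ∫ x in K, F t x ∂μ = ∫ x, F t x ∂μ :=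
    setIntegral_eq_integral_of_forall_compl_eq_zero (hvanish t ht)
  have hderiv_zero (t) (ht : t ∈ Ioo a b) : ∫ x in K, F' t x ∂μ = 0 := by
    refine (setIntegral_eq_integral_of_forall_compl_eq_zero fun x hx => ?_).trans (hzero t ht)
    have hloc : (F · x) =ᶠ[𝓝 t] fun _ => 0 := by
      filter_upwards [Ioo_mem_nhds ht.1 ht.2] with s hs
      exact hvanish s (Ioo_subset_Icc_self hs) x hx
    exact (hderiv t x).unique ((hasDerivAt_const t 0).congr_of_eventuallyEq hloc)
  rw [← hrestrict b ⟨hab, le_rfl⟩, ← hrestrict a ⟨le_rfl, hab⟩]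
  rcases hab.eq_or_lt with rfl | hlt
  · rfl
  obtain ⟨c, hc, hslope⟩ := exists_hasDerivAt_eq_slope _ _ hlt
    (continuous_parametric_integral_of_continuous (μ := μ) hF hK).continuousOn
    fun t _ => hasDerivAt_setIntegral_of_continuous hF hF' hderiv hK t
  rw [hderiv_zero c hc, eq_comm, div_eq_zero_iff, sub_eq_zero, sub_eq_zero] at hslope
  exact hslope.resolve_right hlt.ne'

end ParametricIntegral

section Energy

variable {E : Type*} [NormedAddCommGroup E] [InnerProductSpace ℝ E] [CompleteSpace E]
  (κ ρ : E → ℝ) (Y : E × ℝ → ℝ)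

noncomputable def energyDensity (t : ℝ) (x : E) : ℝ :=
  κ x * timeDeriv Y (x, t) ^ 2 + (ρ x)⁻¹ * ‖spaceGradient Y (x, t)‖ ^ 2

noncomputable def energyDensityDeriv (t : ℝ) (x : E) : ℝ :=
  2 * (κ x * timeDeriv Y (x, t) * timeDeriv (timeDeriv Y) (x, t)
    + (ρ x)⁻¹ * ⟪spaceGradient Y (x, t), spaceGradient (timeDeriv Y) (x, t)⟫_ℝ)

noncomputable def energyFlux (t : ℝ) (x : E) : E :=
  (2 * timeDeriv Y (x, t)) • ((ρ x)⁻¹ • spaceGradient Y (x, t))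

variable {κ ρ Y}

theorem hasDerivAt_energyDensity (hY : ContDiff ℝ 2 Y) (t : ℝ) (x : E) :
    HasDerivAt (energyDensity κ ρ Y · x) (energyDensityDeriv κ ρ Y t x) t := by
  have hU := hasDerivAt_timeSlice
    ((contDiff_timeDeriv hY one_add_one_eq_two.le).differentiable one_ne_zero (x, t))
  have hG := (hasDerivAt_spaceGradient_timeSlice hY x t).norm_sq
  refine (((hU.pow 2).const_mul (κ x)).add (hG.const_mul (ρ x)⁻¹)).congr_deriv ?_
  simp only [energyDensityDeriv]
  ring

theorem continuous_energyDensity (hκ : Continuous κ) (hρ : Continuous ρ) (hρ0 : ∀ x, ρ x ≠ 0)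
    (hY : ContDiff ℝ 2 Y) : Continuous (uncurry (energyDensity κ ρ Y)) := by
  have hU := (contDiff_timeDeriv hY one_add_one_eq_two.le).continuous
  have hG := (contDiff_spaceGradient hY one_add_one_eq_two.le).continuous
  unfold energyDensity
  fun_prop (disch := exact fun p => hρ0 _)

theorem continuous_energyDensityDeriv (hκ : Continuous κ) (hρ : Continuous ρ)
    (hρ0 : ∀ x, ρ x ≠ 0) (hY : ContDiff ℝ 2 Y) :
    Continuous (uncurry (energyDensityDeriv κ ρ Y)) := by
  have hU := contDiff_timeDeriv hY one_add_one_eq_two.le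
  have hUU := (contDiff_timeDeriv (n := 0) hU le_rfl).continuous
  have hG := (contDiff_spaceGradient hY one_add_one_eq_two.le).continuous
  have hGU := (contDiff_spaceGradient (n := 0) hU le_rfl).continuous
  unfold energyDensityDeriv
  fun_prop (disch := exact fun p => hρ0 _)

theorem energyDensity_eq_zero_of_notMem (hY : Differentiable ℝ Y) {C : Set E} (hC : IsClosed C)
    {a b : ℝ} (hab : a < b) (hsupp : ∀ t ∈ Icc a b, ∀ x ∉ C, Y (x, t) = 0) {t : ℝ}
    (ht : t ∈ Icc a b) {x : E} (hx : x ∉ C) : energyDensity κ ρ Y t x = 0 := by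
  rw [energyDensity, timeDeriv_eq_zero_of_eqOn_Icc (hY _) hab ht fun s hs => hsupp s hs x hx,
    spaceGradient_eq_zero_of_notMem (hY _) hC hx (hsupp t ht)]
  simp

theorem integrable_energyDensity [MeasurableSpace E] [OpensMeasurableSpace E] {μ : Measure E}
    [IsFiniteMeasureOnCompacts μ] (hκ : Continuous κ) (hρ : Continuous ρ) (hρ0 : ∀ x, ρ x ≠ 0)
    (hY : ContDiff ℝ 2 Y) {C : Set E} (hC : IsCompact C) {a b : ℝ} (hab : a < b)
    (hsupp : ∀ t ∈ Icc a b, ∀ x ∉ C, Y (x, t) = 0) {t : ℝ} (ht : t ∈ Icc a b) :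
    Integrable (energyDensity κ ρ Y t) μ :=
  ((continuous_energyDensity hκ hρ hρ0 hY).comp
    (Continuous.prodMk_right t)).integrable_of_hasCompactSupport
    (HasCompactSupport.intro hC fun _ hx =>
      energyDensity_eq_zero_of_notMem (hY.differentiable two_ne_zero) hC.isClosed hab hsupp ht hx)

theorem integral_le_integral_energyDensity [MeasurableSpace E] {μ : Measure E}
    (hκ : ∀ x, 0 ≤ κ x) (hρ : ∀ x, 0 ≤ ρ x) {t : ℝ} (hint : Integrable (energyDensity κ ρ Y t) μ) :
    ∫ x, κ x * timeDeriv Y (x, t) ^ 2 ∂μ ≤ ∫ x, energyDensity κ ρ Y t x ∂μ ∧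
      ∫ x, (ρ x)⁻¹ * ‖spaceGradient Y (x, t)‖ ^ 2 ∂μ ≤ ∫ x, energyDensity κ ρ Y t x ∂μ := by
  have hkin (x) : 0 ≤ κ x * timeDeriv Y (x, t) ^ 2 := mul_nonneg (hκ x) (sq_nonneg _)
  have hpot (x) : 0 ≤ (ρ x)⁻¹ * ‖spaceGradient Y (x, t)‖ ^ 2 :=
    mul_nonneg (inv_nonneg.2 (hρ x)) (sq_nonneg _)
  exact ⟨integral_mono_of_nonneg (.of_forall hkin) hint
      (.of_forall fun x => le_add_of_nonneg_right (hpot x)),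
    integral_mono_of_nonneg (.of_forall hpot) hint
      (.of_forall fun x => le_add_of_nonneg_left (hkin x))⟩

theorem contDiff_energyFlux (hρ : ContDiff ℝ 1 ρ) (hρ0 : ∀ x, ρ x ≠ 0) (hY : ContDiff ℝ 2 Y)
    (t : ℝ) : ContDiff ℝ 1 (energyFlux ρ Y t) := by
  have hslice : ContDiff ℝ 1 fun x : E => (x, t) := contDiff_id.prodMk contDiff_const
  exact (contDiff_const.mul ((contDiff_timeDeriv hY one_add_one_eq_two.le).comp hslice)).smul
    ((hρ.inv hρ0).smul ((contDiff_spaceGradient hY one_add_one_eq_two.le).comp hslice))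

end Energy

section WaveEquation

variable {n : ℕ} {κ ρ : EuclideanSpace ℝ (Fin n) → ℝ} {Y : EuclideanSpace ℝ (Fin n) × ℝ → ℝ}

theorem energyDensityDeriv_eq_ediv_energyFlux (hρ : ContDiff ℝ 1 ρ) (hρ0 : ∀ x, ρ x ≠ 0)
    (hY : ContDiff ℝ 2 Y) {t : ℝ}
    (hwave : ∀ x, κ x * timeDeriv (timeDeriv Y) (x, t)
      = ediv (fun z => (ρ z)⁻¹ • spaceGradient Y (z, t)) x) (x : EuclideanSpace ℝ (Fin n)) :
    energyDensityDeriv κ ρ Y t x = ediv (energyFlux ρ Y t) x := by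
  have hU : Differentiable ℝ (timeDeriv Y) :=
    (contDiff_timeDeriv hY one_add_one_eq_two.le).differentiable one_ne_zero
  have hV : ContDiff ℝ 1 fun z => (ρ z)⁻¹ • spaceGradient Y (z, t) :=
    (hρ.inv hρ0).smul ((contDiff_spaceGradient hY one_add_one_eq_two.le).comp
      (contDiff_id.prodMk contDiff_const))
  have hUslice : DifferentiableAt ℝ (fun z => timeDeriv Y (z, t)) x :=
    (hU _).comp x (differentiableAt_id.prodMk (differentiableAt_const t))
  unfold energyFlux
  rw [ediv_smul (hUslice.const_mul 2) (hV.differentiable one_ne_zero x), ← hwave x,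
    fderiv_const_mul hUslice, smul_apply, fderiv_spaceSlice_apply (hU _),
    real_inner_smul_right, real_inner_comm, energyDensityDeriv, smul_eq_mul]
  ring

theorem integral_energyDensity_eq (hκ : Continuous κ) (hρ : ContDiff ℝ 1 ρ)
    (hρ0 : ∀ x, ρ x ≠ 0) (hY : ContDiff ℝ 2 Y) {a b : ℝ} (hab : a < b)
    (hwave : ∀ t ∈ Ioo a b, ∀ x, κ x * timeDeriv (timeDeriv Y) (x, t)
      = ediv (fun z => (ρ z)⁻¹ • spaceGradient Y (z, t)) x)
    {C : Set (EuclideanSpace ℝ (Fin n))} (hC : IsCompact C)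
    (hsupp : ∀ t ∈ Icc a b, ∀ x ∉ C, Y (x, t) = 0) :
    ∫ x, energyDensity κ ρ Y b x = ∫ x, energyDensity κ ρ Y a x := by
  have hYd : Differentiable ℝ Y := hY.differentiable two_ne_zero
  refine integral_eq_of_integral_deriv_eq_zero (continuous_energyDensity hκ hρ.continuous hρ0 hY)
    (continuous_energyDensityDeriv hκ hρ.continuous hρ0 hY) (hasDerivAt_energyDensity hY) hC hab.le
    (fun t ht x hx => energyDensity_eq_zero_of_notMem hYd hC.isClosed hab hsupp ht hx)
    fun t ht => ?_
  simp_rw [energyDensityDeriv_eq_ediv_energyFlux hρ hρ0 hY (hwave t ht)]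
  refine integral_ediv_eq_zero (contDiff_energyFlux hρ hρ0 hY t)
    (HasCompactSupport.intro hC fun x hx => ?_)
  rw [energyFlux, timeDeriv_eq_zero_of_eqOn_Icc (hYd _) hab (Ioo_subset_Icc_self ht)
    fun s hs => hsupp s hs x hx]
  simp

end WaveEquation

theorem apriori_energy_bounds_general
    {n : ℕ}
    (κ ρ : EuclideanSpace ℝ (Fin n) → ℝ)
    (κmin κmax ρmin ρmax : ℝ)
    (hκreg : ContDiff ℝ 1 κ) (hρreg : ContDiff ℝ 1 ρ)
    (hκmin : 0 < κmin) (hρmin : 0 < ρmin)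
    (hκb : ∀ x, κmin ≤ κ x ∧ κ x ≤ κmax)
    (hρb : ∀ x, ρmin ≤ ρ x ∧ ρ x ≤ ρmax)
    (f : EuclideanSpace ℝ (Fin n) → ℝ)
    (y : EuclideanSpace ℝ (Fin n) → ℝ → ℝ)
    (hyreg : ContDiff ℝ 2 (Function.uncurry y))
    (hwave : ∀ x, ∀ t : ℝ, 0 < t →
      κ x * deriv (deriv (y x)) t
        = ediv (fun z => (ρ z)⁻¹ • gradient (fun w => y w t) z) x)
    (hinit : ∀ x, y x 0 = f x)
    (hinit' : ∀ x, deriv (y x) 0 = 0)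
    (hsupp : ∀ T : ℝ, 0 < T → ∃ C : Set (EuclideanSpace ℝ (Fin n)), IsCompact C ∧
        ∀ t ∈ Set.Icc (0 : ℝ) T, Function.support (fun x => y x t) ⊆ C)
    :
    ∀ t : ℝ, 0 < t →
      (∫ x, κ x * (deriv (y x) t) ^ 2) ≤ (∫ x, (ρ x)⁻¹ * ‖gradient f x‖ ^ 2)
      ∧ (∫ x, (ρ x)⁻¹ * ‖gradient (fun w => y w t) x‖ ^ 2)
          ≤ (∫ x, (ρ x)⁻¹ * ‖gradient f x‖ ^ 2) := by
  intro t ht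
  set Y := uncurry y
  have hYd : Differentiable ℝ Y := hyreg.differentiable two_ne_zero
  have hρ0 (x) : 0 < ρ x := hρmin.trans_le (hρb x).1
  have hdt (x s) : deriv (y x) s = timeDeriv Y (x, s) := (hasDerivAt_timeSlice (hYd _)).deriv
  have hdtt (x s) : deriv (deriv (y x)) s = timeDeriv (timeDeriv Y) (x, s) := by
    rw [funext (hdt x)]
    exact (hasDerivAt_timeSlice ((contDiff_timeDeriv hyreg one_add_one_eq_two.le).differentiable
      one_ne_zero _)).deriv
  have hgrad (s x) : gradient (fun w => y w s) x = spaceGradient Y (x, s) :=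
    gradient_spaceSlice (hYd _)
  obtain ⟨C, hC, hCsupp⟩ := hsupp t ht
  have hYsupp : ∀ s ∈ Icc 0 t, ∀ x ∉ C, Y (x, s) = 0 := fun s hs x hx =>
    notMem_support.1 fun h => hx (hCsupp s hs h)
  have hE : ∫ x, energyDensity κ ρ Y t x = ∫ x, (ρ x)⁻¹ * ‖gradient f x‖ ^ 2 := by
    rw [integral_energyDensity_eq hκreg.continuous hρreg (fun x => (hρ0 x).ne') hyreg ht
      (fun s hs x => by simpa only [hdtt, hgrad] using hwave x s hs.1) hC hYsupp]
    congr with x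
    rw [energyDensity, ← hdt, hinit', ← hgrad, funext hinit]
    simp
  simp_rw [hdt, hgrad, ← hE]
  exact integral_le_integral_energyDensity (fun x => hκmin.le.trans (hκb x).1)
    (fun x => (hρ0 x).le) (integrable_energyDensity hκreg.continuous hρreg.continuous
      (fun x => (hρ0 x).ne') hyreg hC ht hYsupp ⟨ht.le, le_rfl⟩)

/-- A priori bounds from energy conservation: for every `t > 0`,
`∫ κ (∂ₜ y(t))² ≤ ∫ ρ⁻¹ |∇f|²` and `∫ ρ⁻¹ |∇y(t)|² ≤ ∫ ρ⁻¹ |∇f|²`. -/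
theorem apriori_energy_bounds
    {n : ℕ} (hn : 1 ≤ n)
    (κ ρ : EuclideanSpace ℝ (Fin n) → ℝ)
    (κmin κmax ρmin ρmax : ℝ)
    (hκreg : ContDiff ℝ 1 κ) (hρreg : ContDiff ℝ 1 ρ)
    (hκmin : 0 < κmin) (hρmin : 0 < ρmin)
    (hκb : ∀ x, κmin ≤ κ x ∧ κ x ≤ κmax)
    (hρb : ∀ x, ρmin ≤ ρ x ∧ ρ x ≤ ρmax)
    (f : EuclideanSpace ℝ (Fin n) → ℝ)
    (hfreg : ContDiff ℝ 2 f) (hfsupp : HasCompactSupport f)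
    (y : EuclideanSpace ℝ (Fin n) → ℝ → ℝ)
    (hyreg : ContDiff ℝ 2 (Function.uncurry y))
    (hwave : ∀ x, ∀ t : ℝ, 0 < t →
      κ x * deriv (deriv (y x)) t
        = ediv (fun z => (ρ z)⁻¹ • gradient (fun w => y w t) z) x)
    (hinit : ∀ x, y x 0 = f x)
    (hinit' : ∀ x, deriv (y x) 0 = 0)
    (hsupp : ∀ T : ℝ, 0 < T → ∃ C : Set (EuclideanSpace ℝ (Fin n)), IsCompact C ∧
        ∀ t ∈ Set.Icc (0 : ℝ) T, Function.support (fun x => y x t) ⊆ C)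
    :
    ∀ t : ℝ, 0 < t →
      (∫ x, κ x * (deriv (y x) t) ^ 2) ≤ (∫ x, (ρ x)⁻¹ * ‖gradient f x‖ ^ 2)
      ∧ (∫ x, (ρ x)⁻¹ * ‖gradient (fun w => y w t) x‖ ^ 2)
          ≤ (∫ x, (ρ x)⁻¹ * ‖gradient f x‖ ^ 2) :=
  apriori_energy_bounds_general κ ρ κmin κmax ρmin ρmax hκreg hρreg hκmin hρmin hκb hρb f y hyreg
    hwave hinit hinit' hsupp
end

section
/- Convergence of the Neumann-series reconstruction: let X and Y be real Banach spaces, L : X → Y and T : Y → X continuous linear maps, and K : X → X a continuous linear map with operator norm ‖K‖ < 1 such that T ∘ L = id_X − K. Let f ∈ X, set m := L f, and define f₀ := T m and f_k := f_{k−1} − T(L f_{k−1} − m) for k ≥ 1. Then the series Σ_{j=0}^{∞} K^j (T m) converges in X and f_k → f as k → ∞; in particular f = Σ_{j=0}^{∞} K^j (T m). -/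
open Filter

/-!
Since `T (L x) = x - K x`, the iteration reads `f_{k+1} = K f_k + T m`, so `f_k` is the `k`-th
partial sum of `∑ K^j (T m)`. As `‖K‖ < 1`, the geometric series `∑ K^j` converges in the Banach
algebra of operators to the inverse of `1 - K`; applied to `T m = (1 - K) f` it sums to `f`.
-/

namespace ContinuousLinearMap

theorem eq_sum_range_pow_apply_of_eq_add {R M : Type*} [Semiring R] [AddCommMonoid M]
    [Module R M] [TopologicalSpace M] (K : M →L[R] M) (b : M) {u : ℕ → M} (h0 : u 0 = b)
    (hsucc : ∀ k, u (k + 1) = K (u k) + b) (k : ℕ) :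
    u k = ∑ j ∈ Finset.range (k + 1), (K ^ j) b := by
  induction k with
  | zero => simpa using h0
  | succ k ih =>
    rw [hsucc, ih, Finset.sum_range_succ' _ (k + 1), map_sum, pow_zero, one_apply_eq_self]
    simp only [pow_succ', mul_apply_eq_comp]

theorem hasSum_pow_apply_sub_self_apply {𝕜 X : Type*} [NontriviallyNormedField 𝕜]
    [NormedAddCommGroup X] [NormedSpace 𝕜 X] [CompleteSpace X] {K : X →L[𝕜] X} (hK : ‖K‖ < 1)
    (x : X) : HasSum (fun j ↦ (K ^ j) (x - K x)) x := by
  have hgeom := (summable_geometric_of_norm_lt_one hK).hasSum.mapL (apply 𝕜 X (x - K x))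
  have hinv : (∑' j, K ^ j) (x - K x) = x := by
    simpa using DFunLike.congr_fun (geom_series_mul_neg K hK) x
  simpa only [apply_apply, hinv] using hgeom

end ContinuousLinearMap

theorem neumann_series_convergence_general
    {X Y : Type*} [NormedAddCommGroup X] [NormedSpace ℝ X] [CompleteSpace X]
    [NormedAddCommGroup Y] [NormedSpace ℝ Y]
    (L : X →L[ℝ] Y) (T : Y →L[ℝ] X) (K : X →L[ℝ] X)
    (hTL : T.comp L = ContinuousLinearMap.id ℝ X - K)
    (hK : ‖K‖ < 1)
    (f : X) (m : Y) (hm : m = L f)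
    (seq : ℕ → X)
    (hseq0 : seq 0 = T m)
    (hseqrec : ∀ k : ℕ, seq (k + 1) = seq k - T (L (seq k) - m)) :
    Summable (fun j : ℕ => (K ^ j) (T m))
      ∧ Tendsto seq atTop (nhds f)
      ∧ f = ∑' j : ℕ, (K ^ j) (T m) := by
  have hTL_apply (x : X) : T (L x) = x - K x := by
    simpa using DFunLike.congr_fun hTL x
  have hsum : HasSum (fun j ↦ (K ^ j) (T m)) f := by
    simpa only [hm, hTL_apply] using ContinuousLinearMap.hasSum_pow_apply_sub_self_apply hK f
  have hseq_succ (k : ℕ) : seq (k + 1) = K (seq k) + T m := by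
    rw [hseqrec, map_sub, hTL_apply]
    abel
  have hseq_eq (k : ℕ) := K.eq_sum_range_pow_apply_of_eq_add (T m) hseq0 hseq_succ k
  refine ⟨hsum.summable, ?_, hsum.tsum_eq.symm⟩
  simpa only [Function.comp_def, ← hseq_eq] using
    hsum.tendsto_sum_nat.comp (tendsto_add_atTop_nat 1)

/-- Convergence of the Neumann-series reconstruction: if `T ∘ L = id − K` with
`‖K‖ < 1`, `m = L f`, and `f₀ = T m`, `f_k = f_{k−1} − T (L f_{k−1} − m)`, then
the series `Σ_j K^j (T m)` converges, `f_k → f`, and `f = Σ_j K^j (T m)`. -/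
theorem neumann_series_convergence
    {X Y : Type*} [NormedAddCommGroup X] [NormedSpace ℝ X] [CompleteSpace X]
    [NormedAddCommGroup Y] [NormedSpace ℝ Y] [CompleteSpace Y]
    (L : X →L[ℝ] Y) (T : Y →L[ℝ] X) (K : X →L[ℝ] X)
    (hTL : T.comp L = ContinuousLinearMap.id ℝ X - K)
    (hK : ‖K‖ < 1)
    (f : X) (m : Y) (hm : m = L f)
    (seq : ℕ → X)
    (hseq0 : seq 0 = T m)
    (hseqrec : ∀ k : ℕ, seq (k + 1) = seq k - T (L (seq k) - m)) :
    Summable (fun j : ℕ => (K ^ j) (T m))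
      ∧ Tendsto seq atTop (nhds f)
      ∧ f = ∑' j : ℕ, (K ^ j) (T m) :=
  neumann_series_convergence_general L T K hTL hK f m hm seq hseq0 hseqrec
end

section
/- Convergence of the Landweber iteration to the minimum norm solution: let H and G be real Hilbert spaces, L : H → G a nonzero bounded linear operator with Hilbert-space adjoint L*, and let m ∈ G lie in the range of L. Let ω be a real number with 0 < ω < 2/‖L‖². Define f₀ := 0 and f_k := f_{k−1} − ω L*(L f_{k−1} − m) for k ≥ 1. Then (f_k) converges in norm to the minimum norm solution f†, i.e., to the unique element f† ∈ H satisfying L f† = m and f† ∈ (ker L)^⊥; equivalently, f† is the unique element of smallest norm among all solutions of L f = m. -/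
/-!
For any solution `u`, `f† := u - P u` with `P` the orthogonal projection onto `ker L` is the
unique solution in `(ker L)ᗮ`, and Pythagoras makes it the unique solution of least norm.

The error `f k - f†` is `Sᵏ (-f†)` for `S = I - ω L*L`, and `‖S x‖² ≤ ‖x‖² - c ‖L x‖²` with
`c = ω (2 - ω ‖L‖²) > 0`; in particular `S` is nonexpansive. Since `S L* = L* S'` with
`S' = I - ω L L*`, which satisfies the same estimate with `L*` in place of `L`, telescoping gives
`∑ₖ c ‖L* S'ᵏ w‖² ≤ ‖w‖²`, hence `Sᵏ (L* w) → 0`. The powers `Sᵏ` being equicontinuous,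
`Sᵏ x → 0` on the closure of `range L*`, which is `(ker L)ᗮ ∋ -f†`.
-/

open Filter Topology
open scoped InnerProduct RealInnerProductSpace

theorem tendsto_of_mem_closure_of_lipschitzWith {ι α β : Type*} [PseudoEMetricSpace α]
    [PseudoEMetricSpace β] {l : Filter ι} {F : ι → α → β} {K : NNReal}
    (hF : ∀ i, LipschitzWith K (F i)) {b : β} {s : Set α}
    (hs : ∀ y ∈ s, Tendsto (F · y) l (𝓝 b)) {x : α} (hx : x ∈ closure s) :
    Tendsto (F · x) l (𝓝 b) :=
  closure_minimal hs ((LipschitzWith.uniformEquicontinuous F K hF).equicontinuous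
    |>.isClosed_setOfPred_tendsto continuous_const) hx

theorem tendsto_apply_iterate_zero_of_sq_norm_le {E F : Type*} [SeminormedAddCommGroup E]
    [SeminormedAddCommGroup F] {T : E → E} {B : E → F} {c : ℝ} (hc : 0 < c)
    (hT : ∀ x, ‖T x‖ ^ 2 ≤ ‖x‖ ^ 2 - c * ‖B x‖ ^ 2) (x : E) :
    Tendsto (fun k ↦ B (T^[k] x)) atTop (𝓝 0) := by
  have htelescope :
      ∀ n, ∑ k ∈ Finset.range n, c * ‖B (T^[k] x)‖ ^ 2 ≤ ‖x‖ ^ 2 - ‖T^[n] x‖ ^ 2 := by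
    intro n
    induction n with
    | zero => simp
    | succ n ih =>
      rw [Finset.sum_range_succ, Function.iterate_succ_apply']
      linarith [hT (T^[n] x)]
  have hsummable : Summable fun k ↦ c * ‖B (T^[k] x)‖ ^ 2 :=
    summable_of_sum_range_le (fun k ↦ by positivity)
      fun n ↦ (htelescope n).trans (sub_le_self _ (sq_nonneg _))
  have hsq : Tendsto (fun k ↦ ‖B (T^[k] x)‖ ^ 2) atTop (𝓝 0) := by
    simpa [hc.ne'] using hsummable.tendsto_atTop_zero.const_mul c⁻¹
  rw [tendsto_zero_iff_norm_tendsto_zero]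
  simpa using hsq.sqrt

section MinimumNorm

variable {E M : Type*} [NormedAddCommGroup E] [InnerProductSpace ℝ E] [AddCommGroup M]
  [Module ℝ M] {A : E →ₗ[ℝ] M} {x y : E}

theorem eq_of_apply_eq_of_mem_orthogonal_ker (hx : x ∈ (LinearMap.ker A)ᗮ)
    (hy : y ∈ (LinearMap.ker A)ᗮ) (h : A x = A y) : x = y := by
  have hker : x - y ∈ LinearMap.ker A := by simp [h]
  have hperp : x - y ∈ (LinearMap.ker A)ᗮ := Submodule.sub_mem _ hx hy
  exact sub_eq_zero.mp
    (Submodule.disjoint_def.mp (LinearMap.ker A).orthogonal_disjoint _ hker hperp)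

theorem sq_norm_eq_of_apply_eq (hy : y ∈ (LinearMap.ker A)ᗮ) (h : A x = A y) :
    ‖x‖ ^ 2 = ‖y‖ ^ 2 + ‖x - y‖ ^ 2 := by
  have hker : x - y ∈ LinearMap.ker A := by simp [h]
  have hpyth := norm_add_sq_eq_norm_sq_add_norm_sq_real
    (Submodule.inner_right_of_mem_orthogonal hker hy)
  rw [sub_add_cancel] at hpyth
  nlinarith [hpyth]

theorem norm_le_of_apply_eq (hy : y ∈ (LinearMap.ker A)ᗮ) (h : A x = A y) : ‖y‖ ≤ ‖x‖ := by
  have hpyth := sq_norm_eq_of_apply_eq hy h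
  exact pow_le_pow_iff_left₀ (norm_nonneg _) (norm_nonneg _) two_ne_zero |>.mp
    (by nlinarith [sq_nonneg ‖x - y‖])

theorem eq_of_apply_eq_of_norm_le (hy : y ∈ (LinearMap.ker A)ᗮ) (h : A x = A y)
    (hxy : ‖x‖ ≤ ‖y‖) : x = y := by
  have hpyth := sq_norm_eq_of_apply_eq hy h
  have hsq : ‖x - y‖ ^ 2 ≤ 0 := by nlinarith [norm_nonneg x]
  simpa [sub_eq_zero] using hsq

end MinimumNorm

theorem exists_mem_orthogonal_ker_apply_eq {E F : Type*} [NormedAddCommGroup E]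
    [InnerProductSpace ℝ E] [CompleteSpace E] [AddCommGroup F] [Module ℝ F] [TopologicalSpace F]
    [T1Space F] (A : E →L[ℝ] F) (u : E) :
    ∃ y ∈ (LinearMap.ker (A : E →ₗ[ℝ] F))ᗮ, A y = A u := by
  set K := LinearMap.ker (A : E →ₗ[ℝ] F)
  have : CompleteSpace K := A.isClosed_ker.completeSpace_coe
  refine ⟨u - K.starProjection u, K.sub_starProjection_mem_orthogonal u, ?_⟩
  have hP : A (K.starProjection u) = 0 := K.starProjection_apply_mem u
  rw [map_sub, hP, sub_zero]

section Landweber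

variable {E F : Type*} [NormedAddCommGroup E] [InnerProductSpace ℝ E] [CompleteSpace E]
  [NormedAddCommGroup F] [InnerProductSpace ℝ F] [CompleteSpace F]

noncomputable def landweberOp (A : E →L[ℝ] F) (ω : ℝ) : E →L[ℝ] E :=
  ContinuousLinearMap.id ℝ E - ω • ((A†) ∘L A)

theorem landweberOp_apply (A : E →L[ℝ] F) (ω : ℝ) (x : E) :
    landweberOp A ω x = x - ω • (A†) (A x) :=
  rfl

theorem sq_norm_landweberOp_apply_le (A : E →L[ℝ] F) (ω : ℝ) (x : E) :
    ‖landweberOp A ω x‖ ^ 2 ≤ ‖x‖ ^ 2 - ω * (2 - ω * ‖A‖ ^ 2) * ‖A x‖ ^ 2 := by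
  have hinner : ⟪x, (A†) (A x)⟫ = ‖A x‖ ^ 2 := by
    rw [ContinuousLinearMap.adjoint_inner_right, real_inner_self_eq_norm_sq]
  have hnorm : ‖(A†) (A x)‖ ^ 2 ≤ ‖A‖ ^ 2 * ‖A x‖ ^ 2 := by
    rw [← mul_pow, ← ContinuousLinearMap.adjoint.norm_map A]
    exact pow_le_pow_left₀ (norm_nonneg _) ((A†).le_opNorm (A x)) 2
  rw [landweberOp_apply, norm_sub_sq_real, real_inner_smul_right, hinner, norm_smul, mul_pow,
    Real.norm_eq_abs, sq_abs]
  nlinarith [mul_le_mul_of_nonneg_left hnorm (sq_nonneg ω)]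

theorem lipschitzWith_landweberOp {A : E →L[ℝ] F} {ω : ℝ} (hω : 0 ≤ ω)
    (hωA : ω * ‖A‖ ^ 2 ≤ 2) : LipschitzWith 1 (landweberOp A ω) := by
  refine AddMonoidHomClass.lipschitz_of_bound_nnnorm _ 1 fun x ↦ ?_
  rw [one_mul, ← NNReal.coe_le_coe, coe_nnnorm, coe_nnnorm,
    ← pow_le_pow_iff_left₀ (norm_nonneg _) (norm_nonneg _) two_ne_zero]
  have hc : 0 ≤ ω * (2 - ω * ‖A‖ ^ 2) * ‖A x‖ ^ 2 := by
    have hgap := sub_nonneg.mpr hωA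
    positivity
  linarith [sq_norm_landweberOp_apply_le A ω x]

theorem landweberOp_comp_adjoint (A : E →L[ℝ] F) (ω : ℝ) :
    landweberOp A ω ∘L (A†) = (A†) ∘L landweberOp (A†) ω := by
  ext w
  simp [landweberOp_apply, ContinuousLinearMap.adjoint_adjoint]

theorem tendsto_landweberOp_iterate_adjoint {A : E →L[ℝ] F} {ω : ℝ} (hω : 0 < ω)
    (hωA : ω * ‖A‖ ^ 2 < 2) (w : F) :
    Tendsto (fun k ↦ (landweberOp A ω)^[k] ((A†) w)) atTop (𝓝 0) := by
  have hsemiconj : Function.Semiconj (A†) (landweberOp (A†) ω) (landweberOp A ω) := fun w ↦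
    (DFunLike.congr_fun (landweberOp_comp_adjoint A ω) w).symm
  have hest := sq_norm_landweberOp_apply_le (A†) ω
  rw [ContinuousLinearMap.adjoint.norm_map] at hest
  exact (tendsto_apply_iterate_zero_of_sq_norm_le (mul_pos hω (by linarith)) hest w).congr
    fun k ↦ hsemiconj.iterate_right k w

theorem tendsto_landweberOp_iterate_of_mem_orthogonal_ker {A : E →L[ℝ] F} {ω : ℝ} (hω : 0 < ω)
    (hωA : ω * ‖A‖ ^ 2 < 2) {x : E} (hx : x ∈ (LinearMap.ker (A : E →ₗ[ℝ] F))ᗮ) :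
    Tendsto (fun k ↦ (landweberOp A ω)^[k] x) atTop (𝓝 0) := by
  rw [ContinuousLinearMap.orthogonal_ker, ← SetLike.mem_coe, Submodule.topologicalClosure_coe] at hx
  have hlip : ∀ k, LipschitzWith 1 (landweberOp A ω)^[k] := fun k ↦ by
    simpa using (lipschitzWith_landweberOp hω.le hωA.le).iterate k
  refine tendsto_of_mem_closure_of_lipschitzWith hlip ?_ hx
  rintro _ ⟨w, rfl⟩
  exact tendsto_landweberOp_iterate_adjoint hω hωA w

theorem landweber_sub_eq_iterate {A : E →L[ℝ] F} {ω : ℝ} {b : F} {f : ℕ → E}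
    (hf : ∀ k, f (k + 1) = f k - ω • (A†) (A (f k) - b)) {x : E} (hx : A x = b) (k : ℕ) :
    f k - x = (landweberOp A ω)^[k] (f 0 - x) := by
  induction k with
  | zero => rfl
  | succ k ih =>
    rw [Function.iterate_succ_apply', ← ih, landweberOp_apply, hf, ← hx, map_sub A (f k) x]
    abel

end Landweber

theorem landweber_convergence_minimum_norm_general
    {H G : Type*}
    [NormedAddCommGroup H] [InnerProductSpace ℝ H] [CompleteSpace H]
    [NormedAddCommGroup G] [InnerProductSpace ℝ G] [CompleteSpace G]
    (L : H →L[ℝ] G)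
    (m : G) (hm : ∃ u : H, L u = m)
    (ω : ℝ) (hω₁ : 0 < ω) (hω₂ : ω < 2 / ‖L‖ ^ 2)
    (f : ℕ → H) (hf0 : f 0 = 0)
    (hfrec : ∀ k : ℕ, f (k + 1) = f k - ω • (ContinuousLinearMap.adjoint L) (L (f k) - m)) :
    ∃ fdag : H,
      L fdag = m ∧ fdag ∈ (LinearMap.ker (L : H →ₗ[ℝ] G))ᗮ
      ∧ (∀ g : H, L g = m → g ∈ (LinearMap.ker (L : H →ₗ[ℝ] G))ᗮ → g = fdag)
      ∧ (∀ g : H, L g = m → ‖fdag‖ ≤ ‖g‖)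
      ∧ (∀ g : H, L g = m → ‖g‖ ≤ ‖fdag‖ → g = fdag)
      ∧ Tendsto f atTop (nhds fdag) := by
  obtain ⟨u, rfl⟩ := hm
  obtain ⟨fdag, hperp, hsol⟩ := exists_mem_orthogonal_ker_apply_eq L u
  refine ⟨fdag, hsol, hperp, fun g hg hg' ↦ eq_of_apply_eq_of_mem_orthogonal_ker hg' hperp
      (hg.trans hsol.symm), fun g hg ↦ norm_le_of_apply_eq hperp (hg.trans hsol.symm),
    fun g hg hle ↦ eq_of_apply_eq_of_norm_le hperp (hg.trans hsol.symm) hle, ?_⟩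
  have hωL : ω * ‖L‖ ^ 2 < 2 := by
    rcases (sq_nonneg ‖L‖).eq_or_lt with h | h
    · rw [← h]
      norm_num
    · exact (lt_div_iff₀ h).mp hω₂
  have herror := landweber_sub_eq_iterate hfrec hsol
  simp only [hf0, zero_sub] at herror
  simpa [← herror] using
    (tendsto_landweberOp_iterate_of_mem_orthogonal_ker hω₁ hωL (neg_mem hperp)).add_const fdag

/-- Convergence of the Landweber iteration to the minimum norm solution:
for a nonzero bounded operator `L` between real Hilbert spaces, `m` in the
range of `L`, and relaxation parameter `0 < ω < 2/‖L‖²`, the iterates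
`f₀ = 0`, `f_{k+1} = f_k − ω L* (L f_k − m)` converge in norm to the unique
`f† ∈ (ker L)ᗮ` with `L f† = m`, which is also the unique minimum norm
solution of `L f = m`. -/
theorem landweber_convergence_minimum_norm
    {H G : Type*}
    [NormedAddCommGroup H] [InnerProductSpace ℝ H] [CompleteSpace H]
    [NormedAddCommGroup G] [InnerProductSpace ℝ G] [CompleteSpace G]
    (L : H →L[ℝ] G) (hL : L ≠ 0)
    (m : G) (hm : ∃ u : H, L u = m)
    (ω : ℝ) (hω₁ : 0 < ω) (hω₂ : ω < 2 / ‖L‖ ^ 2)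
    (f : ℕ → H) (hf0 : f 0 = 0)
    (hfrec : ∀ k : ℕ, f (k + 1) = f k - ω • (ContinuousLinearMap.adjoint L) (L (f k) - m)) :
    ∃ fdag : H,
      L fdag = m ∧ fdag ∈ (LinearMap.ker (L : H →ₗ[ℝ] G))ᗮ
      ∧ (∀ g : H, L g = m → g ∈ (LinearMap.ker (L : H →ₗ[ℝ] G))ᗮ → g = fdag)
      ∧ (∀ g : H, L g = m → ‖fdag‖ ≤ ‖g‖)
      ∧ (∀ g : H, L g = m → ‖g‖ ≤ ‖fdag‖ → g = fdag)
      ∧ Tendsto f atTop (nhds fdag) :=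
  landweber_convergence_minimum_norm_general L m hm ω hω₁ hω₂ f hf0 hfrec
end
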